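/- If α and β are words such that the concatenation α β is a reduced word of some permutation ω, then every restricted shuffle of α with β is also a reduced word of ω. -/
import Mathlib


/-- The adjacent transposition `sᵢ = (i, i+1)` as a permutation of `ℕ`. -/
def sGen (i : ℕ) : Equiv.Perm ℕ := Equiv.swap i (i + 1)

/-- The permutation represented by a word. -/
def toPerm (w : List ℕ) : Equiv.Perm ℕ := (w.map sGen).prod

/-- A word is reduced (of minimal length among words representing the same permutation). -/
def IsReducedWord (w : List ℕ) : Prop := ∀ v : List ℕ, toPerm v = toPerm w → w.length ≤ v.length

/-- `w` is a reduced word for the permutation `ω`. -/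
def IsReducedWordOf (w : List ℕ) (ω : Equiv.Perm ℕ) : Prop :=
  toPerm w = ω ∧ ∀ v : List ℕ, toPerm v = ω → w.length ≤ v.length

/-- The relation `<₁`: `β` is obtained from `α` by swapping two adjacent letters
`x, y` with `y ≥ x + 2` (the smaller letter moves right). -/
def Rel1 (α β : List ℕ) : Prop :=
  ∃ (p q : List ℕ) (x y : ℕ), x + 2 ≤ y ∧
    α = p ++ x :: y :: q ∧ β = p ++ y :: x :: q

/-- Lexicographic order (non-strict) on words. -/
def LexLe (α β : List ℕ) : Prop := α = β ∨ List.Lex (· < ·) α β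

/-- A tower word: a nonempty increasing run of consecutive integers. -/
def IsTowerWord (a : List ℕ) : Prop := a ≠ [] ∧ a.Chain' (fun x y => y = x + 1)

/-- First letter of a tower word. -/
def inn (a : List ℕ) : ℕ := a.headI

/-- Last letter of a tower word. -/
def fin' (a : List ℕ) : ℕ := a.getLastD 0

/-- `L` is the tower decomposition of `w`: a factorization into maximal tower words. -/
def IsTowerDecomp (w : List ℕ) (L : List (List ℕ)) : Prop :=
  L.flatten = w ∧ (∀ a ∈ L, IsTowerWord a) ∧
    L.Chain' (fun a b => inn b ≠ fin' a + 1)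

/-- The relation `<₂`: a directed long-braid move of a tower word past its left neighbour. -/
def Rel2 (α β : List ℕ) : Prop :=
  ∃ (A B : List (List ℕ)) (a b b1 b2 : List ℕ),
    IsTowerDecomp α (A ++ a :: b :: B) ∧
    inn a ≤ inn b ∧ inn b < fin' b ∧ fin' b < fin' a ∧
    IsTowerWord b1 ∧ (b2 = [] ∨ IsTowerWord b2) ∧ b1 ++ b2 = b ∧
    β = A.flatten ++ (b1.map (· + 1)) ++ a ++ b2 ++ B.flatten

/-- The directed-braid order: reflexive-transitive closure of `<₁ ∪ <₂`. -/
def DBraid : List ℕ → List ℕ → Prop :=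
  Relation.ReflTransGen (fun α β => Rel1 α β ∨ Rel2 α β)

/-- The natural word of `ω`: the reduced word whose tower decomposition has
strictly decreasing initial letters. -/
def IsNaturalWordOf (η : List ℕ) (ω : Equiv.Perm ℕ) : Prop :=
  IsReducedWordOf η ω ∧ ∃ L, IsTowerDecomp η L ∧ L.Chain' (fun a b => inn b < inn a)

/-- A natural basic word of `ω`: a reduced word whose tower decomposition satisfies
`fin(aᵢ) > in(aᵢ₊₁)` for all `i`. -/
def IsNaturalBasicOf (β : List ℕ) (ω : Equiv.Perm ℕ) : Prop :=
  IsReducedWordOf β ω ∧ ∃ L, IsTowerDecomp β L ∧ L.Chain' (fun a b => inn b < fin' a)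

/-- One step of the track of a letter `b` through a tower word `a`. -/
def trackStep (a : List ℕ) (b : ℕ) : Option ℕ :=
  if inn a < b ∧ b ≤ fin' a then some (b - 1)
  else if b + 2 ≤ inn a ∨ fin' a + 2 ≤ b then some b
  else none

/-- The track sequence of `b` through a list of tower words. -/
def trackSeq : ℕ → List (List ℕ) → List ℕ
  | b, [] => [b]
  | b, a :: rest =>
    match trackStep a b with
    | none => [b]
    | some b' => b :: trackSeq b' rest

/-- The tower decomposition of a word, as a function. -/
def towerDecomp : List ℕ → List (List ℕ)
  | [] => []
  | x :: xs =>
    match towerDecomp xs with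
    | [] => [[x]]
    | t :: ts => if t.headI = x + 1 then (x :: t) :: ts else [x] :: t :: ts

/-- Merge two words according to a red/blue coloring: `false` takes the next
letter of the first (red) word, `true` the next letter of the second (blue) word. -/
def merge : List Bool → List ℕ → List ℕ → List ℕ
  | [], _, _ => []
  | false :: c, as, bs => as.headI :: merge c as.tail bs
  | true :: c, as, bs => bs.headI :: merge c as bs.tail

/-- `c` is a valid restricted-shuffle plan of the red word with the blue word:
the coloring exhausts both words, and a blue letter may be placed before the
remaining red letters only if none of them equals `b - 1`, `b` or `b + 1`. -/
def ValidRS : List Bool → List ℕ → List ℕ → Prop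
  | [], as, bs => as = [] ∧ bs = []
  | false :: c, as, bs => as ≠ [] ∧ ValidRS c as.tail bs
  | true :: c, as, bs => bs ≠ [] ∧
      (∀ x ∈ as, ¬(x + 1 = bs.headI ∨ x = bs.headI ∨ x = bs.headI + 1)) ∧
      ValidRS c as bs.tail

lemma sGen_commute {x b : ℕ} (h : ¬(x + 1 = b ∨ x = b ∨ x = b + 1)) :
    Commute (sGen x) (sGen b) := by
  push_neg at h
  unfold sGen Commute SemiconjBy
  have h1 : Equiv.swap x (x+1) b = b := Equiv.swap_apply_of_ne_of_ne (by omega) (by omega)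
  have h2 : Equiv.swap x (x+1) (b+1) = b+1 := Equiv.swap_apply_of_ne_of_ne (by omega) (by omega)
  rw [Equiv.mul_swap_eq_swap_mul, h1, h2]

lemma toPerm_cons (x : ℕ) (w : List ℕ) : toPerm (x :: w) = sGen x * toPerm w := by
  simp [toPerm]

lemma merge_spec : ∀ (c : List Bool) (α β : List ℕ), ValidRS c α β →
    toPerm (merge c α β) = toPerm (α ++ β) ∧
    (merge c α β).length = α.length + β.length := by
  intro c
  induction c with
  | nil => intro α β h; obtain ⟨h1, h2⟩ := h; subst h1; subst h2; simp [merge]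
  | cons hd c ih =>
    intro α β h
    cases hd with
    | false =>
      obtain ⟨hne, hv⟩ := h
      obtain ⟨a, as, rfl⟩ := List.exists_cons_of_ne_nil hne
      obtain ⟨ih1, ih2⟩ := ih as β hv
      constructor
      · show toPerm (a :: merge c as β) = _
        rw [toPerm_cons, ih1]; rfl
      · show (a :: merge c as β).length = _
        simp [ih2]; omega
    | true =>
      obtain ⟨hne, hcomm, hv⟩ := h
      obtain ⟨b, bs, rfl⟩ := List.exists_cons_of_ne_nil hne
      obtain ⟨ih1, ih2⟩ := ih α bs hv
      have hc : Commute (toPerm α) (sGen b) := by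
        unfold toPerm
        apply Commute.list_prod_left
        intro y hy
        simp only [List.mem_map] at hy
        obtain ⟨x, hx, rfl⟩ := hy
        exact sGen_commute (hcomm x hx)
      constructor
      · show toPerm (b :: merge c α bs) = _
        rw [toPerm_cons, ih1]
        have : toPerm (α ++ b :: bs) = toPerm α * toPerm (b :: bs) := by
          simp [toPerm]
        rw [this, toPerm_cons]
        have : toPerm (α ++ bs) = toPerm α * toPerm bs := by simp [toPerm]
        rw [this, ← mul_assoc, ← mul_assoc, hc.eq]
      · show (b :: merge c α bs).length = _
        simp [ih2]; omega

/-- every restricted shuffle of α with β is a reduced word of ω,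
provided the concatenation α β is a reduced word of ω. -/
theorem restricted_shuffle_reduced (ω : Equiv.Perm ℕ) (α β : List ℕ)
    (h : IsReducedWordOf (α ++ β) ω) :
    ∀ c : List Bool, ValidRS c α β → IsReducedWordOf (merge c α β) ω := by
  intro c hc
  obtain ⟨h1, h2⟩ := merge_spec c α β hc
  obtain ⟨hp, hmin⟩ := h
  refine ⟨by rw [h1, hp], fun v hv => ?_⟩
  have := hmin v hv
  rw [List.length_append] at this
  omega
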